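/- arXiv:1608.04662 — 3 statements merged into one kernel-verified Lean document; each statement's English description precedes it below -/
import Mathlib

section
/- Assume the class of RN graphs has the Ramsey property, and assume for ordered posets A, B (as complete RN graphs) there is a sequence C₂, C₃, … of RN graphs with C_ℓ → (B)^A_2, C_ℓ containing no bad quasicycle of length in [2,ℓ], and homomorphisms h_ℓ: C_{ℓ+1} → C_ℓ. Then the class of ordered posets is Ramsey for the pair (A,B): there exists an ordered poset C with C → (B)^A_2. -/
/-- A bad quasicycle of length `j` in relations `R`, `N`. -/
def IsBadQuasicycle {V : Type*} (R N : V → V → Prop) (j : ℕ) (x : ℕ → V) : Prop :=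
  2 ≤ j ∧ (∀ i, i + 1 < j → R (x i) (x (i + 1))) ∧ N (x 0) (x (j - 1))

/-- A finite ordered poset: a strict partial order `R` on `Fin n` together with
the natural linear order on `Fin n` as a linear extension. -/
structure OPoset where
  n : ℕ
  R : Fin n → Fin n → Prop
  trans : ∀ x y z, R x y → R y z → R x z
  sub : ∀ x y, R x y → x < y

/-- An embedding of ordered posets: a strictly monotone map preserving `R`
in both directions (hence preserving the linear order in both directions). -/
structure OPoset.Emb (A B : OPoset) where
  f : Fin A.n → Fin B.n
  mono : StrictMono f
  hR : ∀ x y, A.R x y ↔ B.R (f x) (f y)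

/-- Composition of embeddings of ordered posets. -/
def OPoset.Emb.comp {A B C : OPoset} (g : B.Emb C) (e : A.Emb B) : A.Emb C where
  f := g.f ∘ e.f
  mono := g.mono.comp e.mono
  hR := fun x y => (e.hR x y).trans (g.hR (e.f x) (e.f y))

/-- `C → (B)^A_r` for ordered posets: every `r`-coloring of the copies
(embeddings) of `A` in `C` admits a copy of `B` in `C` all of whose copies of
`A` receive the same color. -/
def OPoset.Arrow (C B A : OPoset) (r : ℕ) : Prop :=
  ∀ χ : A.Emb C → Fin r, ∃ g : B.Emb C,
    ∀ e₁ e₂ : A.Emb B, χ (g.comp e₁) = χ (g.comp e₂)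

/-- A finite RN graph: two disjoint relations `R`, `N` on `Fin n`, both
contained in the natural (strict) linear order on `Fin n`. -/
structure RNGph where
  n : ℕ
  R : Fin n → Fin n → Prop
  N : Fin n → Fin n → Prop
  Rsub : ∀ x y, R x y → x < y
  Nsub : ∀ x y, N x y → x < y
  disj : ∀ x y, ¬(R x y ∧ N x y)

/-- An embedding of RN graphs: a strictly monotone map preserving `R` and `N`
in both directions. -/
structure RNGph.Emb (A B : RNGph) where
  f : Fin A.n → Fin B.n
  mono : StrictMono f
  hR : ∀ x y, A.R x y ↔ B.R (f x) (f y)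
  hN : ∀ x y, A.N x y ↔ B.N (f x) (f y)

/-- Composition of embeddings of RN graphs. -/
def RNGph.Emb.comp {A B C : RNGph} (g : B.Emb C) (e : A.Emb B) : A.Emb C where
  f := g.f ∘ e.f
  mono := g.mono.comp e.mono
  hR := fun x y => (e.hR x y).trans (g.hR (e.f x) (e.f y))
  hN := fun x y => (e.hN x y).trans (g.hN (e.f x) (e.f y))

/-- A homomorphism of RN graphs: maps `R`-edges to `R`-edges and
`N`-edges to `N`-edges. -/
structure RNGph.Hom (A B : RNGph) where
  f : Fin A.n → Fin B.n
  hR : ∀ x y, A.R x y → B.R (f x) (f y)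
  hN : ∀ x y, A.N x y → B.N (f x) (f y)

/-- `C → (B)^A_r` for RN graphs. -/
def RNGph.Arrow (C B A : RNGph) (r : ℕ) : Prop :=
  ∀ χ : A.Emb C → Fin r, ∃ g : B.Emb C,
    ∀ e₁ e₂ : A.Emb B, χ (g.comp e₁) = χ (g.comp e₂)

/-- The complete RN graph associated with an ordered poset: `N = < − R`. -/
def OPoset.toRN (P : OPoset) : RNGph where
  n := P.n
  R := P.R
  N := fun x y => x < y ∧ ¬ P.R x y
  Rsub := P.sub
  Nsub := fun _ _ h => h.1
  disj := fun _ _ h => h.2.2 h.1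

/-! Take `ℓ = max 2 |C₂|`. Composing the homomorphisms gives `C_ℓ → C₂`, and since `R` is contained in
the linear order, every `R`-path of `C_ℓ` has at most `ℓ` vertices. As `C_ℓ` has no bad
quasicycle of length `≤ ℓ`, the transitive closure of `R(C_ℓ)` misses `N(C_ℓ)`; so this closure
is an ordered poset in which every RN-embedding of `A.toRN`, `B.toRN` into `C_ℓ` is a poset
embedding, and `C_ℓ → (B)^A_2` transfers. -/

theorem Relation.TransGen.exists_path {α : Type*} {r : α → α → Prop} {a b : α}
    (h : Relation.TransGen r a b) :
    ∃ (k : ℕ) (x : ℕ → α), x 0 = a ∧ x (k + 1) = b ∧ ∀ i ≤ k, r (x i) (x (i + 1)) := by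
  induction h with
  | single hab => exact ⟨0, fun i => if i = 0 then a else _, rfl, rfl, by simpa using hab⟩
  | @tail c d _ hcd ih =>
    obtain ⟨k, x, hx0, hxk, hx⟩ := ih
    refine ⟨k + 1, Function.update x (k + 2) d, by simp [hx0], by simp, fun i hi => ?_⟩
    rcases hi.lt_or_eq with hi | rfl
    · simpa [Function.update_of_ne (show i ≠ k + 2 by omega),
        Function.update_of_ne (show i + 1 ≠ k + 2 by omega)] using hx i (by omega)
    · simpa [hxk] using hcd

theorem Fin.lt_of_chain_lt {n m : ℕ} {x : ℕ → Fin n} (hx : ∀ i < m, x i < x (i + 1)) :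
    m < n := by
  have hmono : StrictMono fun i : Fin (m + 1) => x i :=
    Fin.strictMono_iff_lt_succ.2 fun i => hx i i.isLt
  simpa using Fintype.card_le_of_injective _ hmono.injective

theorem Relation.transGen_lt {n : ℕ} {r : Fin n → Fin n → Prop} (hr : ∀ x y, r x y → x < y)
    {a b : Fin n} (h : Relation.TransGen r a b) : a < b :=
  Relation.TransGen.trans_induction_on h (hr _ _) fun _ _ => lt_trans

namespace RNGph

def Hom.id (E : RNGph) : Hom E E := ⟨_root_.id, fun _ _ => _root_.id, fun _ _ => _root_.id⟩

def Hom.comp {E F G : RNGph} (g : Hom F G) (f : Hom E F) : Hom E G :=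
  ⟨g.f ∘ f.f, fun _ _ h => g.hR _ _ (f.hR _ _ h), fun _ _ h => g.hN _ _ (f.hN _ _ h)⟩

theorem nonempty_hom_of_succ (C : ℕ → RNGph) {m : ℕ}
    (h : ∀ ℓ, m ≤ ℓ → Nonempty (Hom (C (ℓ + 1)) (C ℓ))) :
    ∀ ℓ, m ≤ ℓ → Nonempty (Hom (C ℓ) (C m)) := by
  intro ℓ hℓ
  induction ℓ, hℓ using Nat.le_induction with
  | base => exact ⟨Hom.id _⟩
  | succ ℓ hℓ ih => exact ⟨ih.some.comp (h ℓ hℓ).some⟩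

theorem transGen_R_disjoint_N {E D : RNGph} (φ : Hom E D)
    (hE : ∀ j, 2 ≤ j → j ≤ D.n → ∀ x, ¬ IsBadQuasicycle E.R E.N j x)
    {a b : Fin E.n} (hab : Relation.TransGen E.R a b) : ¬ E.N a b := by
  intro hN
  obtain ⟨k, x, rfl, rfl, hx⟩ := hab.exists_path
  have hlen : k + 1 < D.n :=
    Fin.lt_of_chain_lt (x := φ.f ∘ x) fun i hi =>
      D.Rsub _ _ (φ.hR _ _ (hx i (Nat.lt_succ_iff.1 hi)))
  exact hE (k + 2) (by omega) hlen x ⟨by omega, fun i hi => hx i (by omega), hN⟩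

def toPoset (E : RNGph) : OPoset where
  n := E.n
  R := Relation.TransGen E.R
  trans _ _ _ := Relation.TransGen.trans
  sub _ _ := Relation.transGen_lt E.Rsub

def Emb.toPoset {A : OPoset} {E : RNGph}
    (hE : ∀ x y, Relation.TransGen E.R x y → ¬ E.N x y) (e : Emb A.toRN E) :
    OPoset.Emb A E.toPoset where
  f := e.f
  mono := e.mono
  hR x y := by
    refine ⟨fun h => .single ((e.hR x y).1 h), fun h => by_contra fun hA => hE _ _ h ?_⟩
    exact (e.hN x y).1 ⟨e.mono.lt_iff_lt.1 (Relation.transGen_lt E.Rsub h), hA⟩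

end RNGph

def OPoset.Emb.toRN {A B : OPoset} (e : A.Emb B) : RNGph.Emb A.toRN B.toRN where
  f := e.f
  mono := e.mono
  hR := e.hR
  hN x y := and_congr e.mono.lt_iff_lt.symm (not_congr (e.hR x y))

theorem RNGph.Arrow.toPoset {E : RNGph} {A B : OPoset} {r : ℕ}
    (hE : ∀ x y, Relation.TransGen E.R x y → ¬ E.N x y) (h : E.Arrow B.toRN A.toRN r) :
    E.toPoset.Arrow B A r := fun χ =>
  let ⟨g, hg⟩ := h (χ ∘ Emb.toPoset hE)
  ⟨g.toPoset hE, fun e₁ e₂ => hg e₁.toRN e₂.toRN⟩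

theorem stmt11_general (A B : OPoset)
    (C : ℕ → RNGph)
    (hArrow : ∀ ℓ, 2 ≤ ℓ → RNGph.Arrow (C ℓ) B.toRN A.toRN 2)
    (hℓRN : ∀ ℓ, 2 ≤ ℓ → ∀ j, 2 ≤ j → j ≤ ℓ →
      ∀ x : ℕ → Fin (C ℓ).n, ¬ IsBadQuasicycle (C ℓ).R (C ℓ).N j x)
    (hHom : ∀ ℓ, 2 ≤ ℓ → Nonempty (RNGph.Hom (C (ℓ + 1)) (C ℓ))) :
    ∃ D : OPoset, OPoset.Arrow D B A 2 := by
  set ℓ := max 2 (C 2).n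
  have hℓ : 2 ≤ ℓ := le_max_left _ _
  obtain ⟨φ⟩ := RNGph.nonempty_hom_of_succ C hHom ℓ hℓ
  have hdisj : ∀ x y, Relation.TransGen (C ℓ).R x y → ¬ (C ℓ).N x y := fun _ _ =>
    RNGph.transGen_R_disjoint_N φ fun j hj hjn =>
      hℓRN ℓ hℓ j hj (hjn.trans (le_max_right _ _))
  exact ⟨(C ℓ).toPoset, (hArrow ℓ hℓ).toPoset hdisj⟩

/-- If RN graphs have the Ramsey property and for ordered posets `A`, `B`
(viewed as complete RN graphs) there is a sequence `C₂, C₃, …` of RN graphs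
with `C_ℓ → (B)^A_2`, no bad quasicycle of length in `[2, ℓ]`, and
homomorphisms `C_{ℓ+1} → C_ℓ`, then there is an ordered poset `C` with
`C → (B)^A_2`. -/
theorem stmt11 (A B : OPoset)
    (ramsey : ∀ A' B' : RNGph, ∃ C' : RNGph, RNGph.Arrow C' B' A' 2)
    (C : ℕ → RNGph)
    (hArrow : ∀ ℓ, 2 ≤ ℓ → RNGph.Arrow (C ℓ) B.toRN A.toRN 2)
    (hℓRN : ∀ ℓ, 2 ≤ ℓ → ∀ j, 2 ≤ j → j ≤ ℓ →
      ∀ x : ℕ → Fin (C ℓ).n, ¬ IsBadQuasicycle (C ℓ).R (C ℓ).N j x)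
    (hHom : ∀ ℓ, 2 ≤ ℓ → Nonempty (RNGph.Hom (C (ℓ + 1)) (C ℓ))) :
    ∃ D : OPoset, OPoset.Arrow D B A 2 :=
  stmt11_general A B C hArrow hℓRN hHom
end

section
/- Let D be an RN graph with no bad quasicycle of length ≤ ℓ−1, and let P be an RN graph with a homomorphism f: P → D. If x₁,…,x_{ℓ'} is a bad quasicycle in P of length ℓ' ≤ ℓ, then ℓ' = ℓ and f is injective on {x₁,…,x_ℓ} with f(x₁),…,f(x_ℓ) a bad quasicycle of length ℓ in D. -/
/-- `(X, R, N, ≤)` is an RN graph: `R`, `N` are disjoint and contained in `<`. -/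
def IsRNGraph {V : Type*} [LinearOrder V] (R N : V → V → Prop) : Prop :=
  (∀ x y, R x y → x < y) ∧ (∀ x y, N x y → x < y) ∧ ∀ x y, ¬(R x y ∧ N x y)

/-- An RN graph is good if it contains no bad quasicycle of any length. -/
def GoodRN {V : Type*} (R N : V → V → Prop) : Prop :=
  ∀ j (x : ℕ → V), ¬ IsBadQuasicycle R N j x

/-! A homomorphism carries a bad quasicycle of `P` to one of the same length in `D`, so minimality
of `ℓ` in `D` forces `ℓ' = ℓ`. Along the image the `R`-edges strictly increase, hence the image
vertices are pairwise distinct. -/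

section

variable {V W : Type*}

lemma IsBadQuasicycle.map {RP NP : V → V → Prop} {RD ND : W → W → Prop} {f : V → W}
    (hfR : ∀ x y, RP x y → RD (f x) (f y)) (hfN : ∀ x y, NP x y → ND (f x) (f y))
    {j : ℕ} {x : ℕ → V} (h : IsBadQuasicycle RP NP j x) :
    IsBadQuasicycle RD ND j (f ∘ x) :=
  ⟨h.1, fun i hi => hfR _ _ (h.2.1 i hi), hfN _ _ h.2.2⟩

lemma IsBadQuasicycle.strictMonoOn [Preorder W] {R N : W → W → Prop}
    (hR : ∀ a b, R a b → a < b) {j : ℕ} {y : ℕ → W} (h : IsBadQuasicycle R N j y) :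
    StrictMonoOn y (Set.Iio j) :=
  strictMonoOn_of_lt_succ Set.ordConnected_Iio fun i _ _ hi =>
    hR _ _ (h.2.1 i (by simpa [Order.succ_eq_add_one] using hi))

end

theorem stmt14_general {V W : Type*} [LinearOrder V] [LinearOrder W]
    (RP NP : V → V → Prop) (RD ND : W → W → Prop)
    (hD : IsRNGraph RD ND)
    (f : V → W)
    (hfR : ∀ x y, RP x y → RD (f x) (f y))
    (hfN : ∀ x y, NP x y → ND (f x) (f y))
    (ℓ : ℕ)
    (hno : ∀ j, 2 ≤ j → j ≤ ℓ - 1 → ∀ y : ℕ → W, ¬ IsBadQuasicycle RD ND j y)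
    (ℓ' : ℕ) (hle : ℓ' ≤ ℓ)
    (x : ℕ → V) (hbad : IsBadQuasicycle RP NP ℓ' x) :
    ℓ' = ℓ ∧
    Set.InjOn f {v | ∃ i < ℓ, x i = v} ∧
    IsBadQuasicycle RD ND ℓ (fun i => f (x i)) := by
  have himage := hbad.map hfR hfN
  obtain rfl : ℓ' = ℓ := by
    by_contra hne
    exact hno ℓ' hbad.1 (by omega) _ himage
  exact ⟨rfl, (himage.strictMonoOn hD.1).injOn.image_of_comp, himage⟩

/-- If `D` has no bad quasicycle of length `≤ ℓ − 1` and `f : P → D` is a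
homomorphism, then any bad quasicycle of length `ℓ' ≤ ℓ` in `P` has
`ℓ' = ℓ`, `f` is injective on its vertices, and its image is a bad
quasicycle of length `ℓ` in `D`. -/
theorem stmt14 {V W : Type*} [LinearOrder V] [LinearOrder W]
    (RP NP : V → V → Prop) (RD ND : W → W → Prop)
    (hP : IsRNGraph RP NP) (hD : IsRNGraph RD ND)
    (f : V → W)
    (hfR : ∀ x y, RP x y → RD (f x) (f y))
    (hfN : ∀ x y, NP x y → ND (f x) (f y))
    (ℓ : ℕ)
    (hno : ∀ j, 2 ≤ j → j ≤ ℓ - 1 → ∀ y : ℕ → W, ¬ IsBadQuasicycle RD ND j y)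
    (ℓ' : ℕ) (hle : ℓ' ≤ ℓ)
    (x : ℕ → V) (hbad : IsBadQuasicycle RP NP ℓ' x) :
    ℓ' = ℓ ∧
    Set.InjOn f {v | ∃ i < ℓ, x i = v} ∧
    IsBadQuasicycle RD ND ℓ (fun i => f (x i)) :=
  stmt14_general RP NP RD ND hD f hfR hfN ℓ hno ℓ' hle x hbad
end

section
/- Let A be a complete good RN graph and D an RN graph without bad quasicycles of length ≤ ℓ−1 (ℓ ≥ 3), and suppose y₁,…,y_ℓ is a bad quasicycle of length ℓ in D. If r < s with s − r ≥ 2, (r,s) ≠ (1,ℓ), and à ∈ binom(D,A) is a copy of A containing y_r and y_s, then (y_r, y_s) ∈ N(D); moreover this leads to a bad quasicycle of length ≤ ℓ−1 in D, a contradiction — hence no copy of A in D contains two vertices y_r, y_s with s − r ≥ 2 and (r,s) ≠ (1,ℓ). -/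
/-!
A chord `(y r, y s)` of a bad quasicycle `y 0, …, y (ℓ-1)`, other than its closing pair, yields a
strictly shorter bad quasicycle: an `R`-chord lets the `R`-path skip the vertices strictly between
`y r` and `y s`, while an `N`-chord closes the segment `y r, …, y s` into a bad quasicycle of its own.
Inside a copy of a complete RN graph any two vertices span a chord of one of these two kinds, so a
copy of `A` cannot contain such a pair when `D` has no shorter bad quasicycles.
-/

namespace IsBadQuasicycle

variable {V : Type*} {R N : V → V → Prop} {ℓ : ℕ} {y : ℕ → V}

theorem apply_lt_apply [Preorder V] (hR : ∀ a b, R a b → a < b) (hy : IsBadQuasicycle R N ℓ y)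
    {r s : ℕ} (hrs : r < s) (hs : s < ℓ) : y r < y s :=
  strictMonoOn_Iic_of_lt_succ (n := ℓ - 1)
    (fun m hm => by simpa using hR _ _ (hy.2.1 m (by omega)))
    (Set.mem_Iic.2 (by omega)) (Set.mem_Iic.2 (by omega)) hrs

/-- Skipping `y (r+1), …, y (s-1)` along an `R`-chord `(y r, y s)`. -/
theorem shortcut {r s : ℕ} (hy : IsBadQuasicycle R N ℓ y) (hrs : r < s) (hs : s < ℓ)
    (hR : R (y r) (y s)) :
    IsBadQuasicycle R N (ℓ - (s - r - 1)) fun i => if i ≤ r then y i else y (i + (s - r - 1)) := by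
  obtain ⟨hℓ, hpath, hN⟩ := hy
  refine ⟨by omega, fun i hi => ?_, ?_⟩
  · rcases lt_trichotomy i r with hir | rfl | hir
    · simpa [hir.le, Nat.succ_le_of_lt hir] using hpath i (by omega)
    · simpa [show i + 1 + (s - i - 1) = s by omega] using hR
    · simpa [hir.not_ge, (hir.trans (Nat.lt_succ_self i)).not_ge,
        show i + 1 + (s - r - 1) = i + (s - r - 1) + 1 by omega] using hpath _ (by omega)
  · simpa [show ¬ ℓ - (s - r - 1) - 1 ≤ r by omega,
      show ℓ - (s - r - 1) - 1 + (s - r - 1) = ℓ - 1 by omega] using hN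

theorem segment {r s : ℕ} (hy : IsBadQuasicycle R N ℓ y) (hrs : r < s) (hs : s < ℓ)
    (hN : N (y r) (y s)) : IsBadQuasicycle R N (s - r + 1) fun i => y (r + i) :=
  ⟨by omega, fun i hi => hy.2.1 (r + i) (by omega),
    by simpa [show r + (s - r) = s by omega] using hN⟩

theorem exists_shorter_of_chord {r s : ℕ} (hy : IsBadQuasicycle R N ℓ y) (hrs : r + 2 ≤ s)
    (hs : s < ℓ) (hne : ¬ (r = 0 ∧ s = ℓ - 1)) (hchord : R (y r) (y s) ∨ N (y r) (y s)) :
    ∃ j, 2 ≤ j ∧ j ≤ ℓ - 1 ∧ ∃ z : ℕ → V, IsBadQuasicycle R N j z := by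
  rcases hchord with hR | hN
  · exact ⟨_, by omega, by omega, _, hy.shortcut (by omega) hs hR⟩
  · exact ⟨_, by omega, by omega, _, hy.segment (by omega) hs hN⟩

end IsBadQuasicycle

theorem stmt15_general {V W : Type*} [LinearOrder V] [LinearOrder W]
    (R N : V → V → Prop) (RA NA : W → W → Prop)
    (hD : IsRNGraph R N)
    (hAcomp : ∀ a b : W, a < b → RA a b ∨ NA a b)
    (ℓ : ℕ)
    (hno : ∀ j, 2 ≤ j → j ≤ ℓ - 1 → ∀ z : ℕ → V, ¬ IsBadQuasicycle R N j z)
    (y : ℕ → V) (hbad : IsBadQuasicycle R N ℓ y)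
    -- f is an embedding of A into D, i.e. a copy of A in D
    (f : W → V) (hmono : StrictMono f)
    (hfR : ∀ a b, RA a b ↔ R (f a) (f b))
    (hfN : ∀ a b, NA a b ↔ N (f a) (f b)) :
    ∀ r s, r + 2 ≤ s → s < ℓ → ¬ (r = 0 ∧ s = ℓ - 1) →
      ¬ (y r ∈ Set.range f ∧ y s ∈ Set.range f) := by
  rintro r s hrs hs hne ⟨⟨a, ha⟩, ⟨b, hb⟩⟩
  have hab : a < b := hmono.lt_iff_lt.1 (ha ▸ hb ▸ hbad.apply_lt_apply hD.1 (by omega) hs)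
  have hchord : R (y r) (y s) ∨ N (y r) (y s) := by
    rw [← ha, ← hb, ← hfR, ← hfN]
    exact hAcomp a b hab
  obtain ⟨j, hj2, hjℓ, z, hz⟩ := hbad.exists_shorter_of_chord hrs hs hne hchord
  exact hno j hj2 hjℓ z hz

/-- Let `A` be a complete (good) RN graph, let `D` be an RN graph without
bad quasicycles of length `≤ ℓ − 1` (`ℓ ≥ 3`), and let `y 0, …, y (ℓ-1)` be
a bad quasicycle of length `ℓ` in `D`. Then no copy of `A` in `D` contains
two vertices `y r`, `y s` with `s − r ≥ 2` other than the pair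
`(y 0, y (ℓ-1))`. -/
theorem stmt15 {V W : Type*} [LinearOrder V] [LinearOrder W]
    (R N : V → V → Prop) (RA NA : W → W → Prop)
    (hD : IsRNGraph R N) (hA : IsRNGraph RA NA)
    (hAcomp : ∀ a b : W, a < b → RA a b ∨ NA a b)
    (hAgood : GoodRN RA NA)
    (ℓ : ℕ) (hℓ : 3 ≤ ℓ)
    (hno : ∀ j, 2 ≤ j → j ≤ ℓ - 1 → ∀ z : ℕ → V, ¬ IsBadQuasicycle R N j z)
    (y : ℕ → V) (hbad : IsBadQuasicycle R N ℓ y)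
    -- f is an embedding of A into D, i.e. a copy of A in D
    (f : W → V) (hmono : StrictMono f)
    (hfR : ∀ a b, RA a b ↔ R (f a) (f b))
    (hfN : ∀ a b, NA a b ↔ N (f a) (f b)) :
    ∀ r s, r + 2 ≤ s → s < ℓ → ¬ (r = 0 ∧ s = ℓ - 1) →
      ¬ (y r ∈ Set.range f ∧ y s ∈ Set.range f) :=
  stmt15_general R N RA NA hD hAcomp ℓ hno y hbad f hmono hfR hfN
end
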